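/- arXiv:2407.16304 — 4 statements merged into one kernel-verified Lean document; each statement's English description precedes it below -/
import Mathlib

section
/- Let H be a real Hilbert space, R > 0, and let S be a nonempty closed set in H. Then S is R-prox-regular if and only if for any x₁, x₂ ∈ S and any proximal normals ς₁ ∈ N_S(x₁), ς₂ ∈ N_S(x₂), one has ⟨ς₂ - ς₁, x₂ - x₁⟩ ≥ -(1/2)·((‖ς₂‖ + ‖ς₁‖)/R)·‖x₂ - x₁‖². -/
/-!
Expanding the square, `x` is a nearest point of `S` to `x + v` iff `2⟪v, s - x⟫ ≤ ‖s - x‖²` for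
all `s ∈ S`. Applied to `v = tς` with `t ↑ R`, this shows that `S` is `R`-prox-regular iff
`2R⟪ς, s - x⟫ ≤ ‖ς‖‖s - x‖²` for every proximal normal `ς` at `x` and every `s ∈ S`. Adding this
inequality at `(x₁, ς₁)` and at `(x₂, ς₂)` gives the monotonicity estimate; conversely the estimate
with `ς₁ = 0` gives it back.
-/

open Metric

variable {H : Type*} [NormedAddCommGroup H] [InnerProductSpace ℝ H]

/-- The set of nearest points of `S` to `y`. -/
def projSet (S : Set H) (y : H) : Set H := {x ∈ S | ∀ s ∈ S, dist y x ≤ dist y s}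

/-- The proximal normal cone to `S` at `x`. -/
def proxNormalCone (S : Set H) (x : H) : Set H :=
  {ς | ∃ η : ℝ, 0 < η ∧ x ∈ projSet S (x + η • ς)}

/-- `S` is `R`-prox-regular. -/
def IsProxRegular (R : ℝ) (S : Set H) : Prop :=
  ∀ x ∈ S, ∀ ς ∈ proxNormalCone S x, ‖ς‖ ≤ 1 →
    ∀ t : ℝ, 0 < t → t < R → x ∈ projSet S (x + t • ς)

lemma mem_projSet_add_iff {S : Set H} {x : H} (hx : x ∈ S) (v : H) :
    x ∈ projSet S (x + v) ↔ ∀ s ∈ S, 2 * inner ℝ v (s - x) ≤ ‖s - x‖ ^ 2 := by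
  simp only [projSet, Set.mem_ofPred_eq, hx, true_and]
  refine forall₂_congr fun s _ => ?_
  rw [dist_eq_norm, dist_eq_norm, add_sub_cancel_left, ← sq_le_sq₀ (norm_nonneg _) (norm_nonneg _),
    show x + v - s = v - (s - x) by abel, norm_sub_sq_real]
  constructor <;> intro h <;> linarith [sq_nonneg ‖s - x‖]

lemma zero_mem_proxNormalCone {S : Set H} {x : H} (hx : x ∈ S) : (0 : H) ∈ proxNormalCone S x :=
  ⟨1, one_pos, (mem_projSet_add_iff hx _).2 fun s _ => by simp⟩

lemma smul_mem_proxNormalCone {S : Set H} {x ς : H} (hς : ς ∈ proxNormalCone S x) {c : ℝ}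
    (hc : 0 < c) : c • ς ∈ proxNormalCone S x := by
  obtain ⟨η, hη, hproj⟩ := hς
  exact ⟨η / c, div_pos hη hc, by rwa [smul_smul, div_mul_cancel₀ η hc.ne']⟩

lemma IsProxRegular.two_mul_inner_le_of_norm_le_one {R : ℝ} (hR : 0 < R) {S : Set H}
    (hS : IsProxRegular R S) {x ς s : H} (hx : x ∈ S) (hς : ς ∈ proxNormalCone S x)
    (hς₁ : ‖ς‖ ≤ 1) (hs : s ∈ S) :
    2 * R * inner ℝ ς (s - x) ≤ ‖s - x‖ ^ 2 := by
  have hIoo : Set.Ioo 0 R ⊆ {t | 2 * t * inner ℝ ς (s - x) ≤ ‖s - x‖ ^ 2} := fun t ⟨ht, htR⟩ => by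
    have := (mem_projSet_add_iff hx _).1 (hS x hx ς hς hς₁ t ht htR) s hs
    rwa [real_inner_smul_left, ← mul_assoc] at this
  have hIcc := ((isClosed_le (by fun_prop) continuous_const).closure_subset_iff.2 hIoo)
  rw [closure_Ioo hR.ne] at hIcc
  exact hIcc ⟨hR.le, le_rfl⟩

lemma IsProxRegular.two_mul_inner_le {R : ℝ} (hR : 0 < R) {S : Set H} (hS : IsProxRegular R S)
    {x ς s : H} (hx : x ∈ S) (hς : ς ∈ proxNormalCone S x) (hs : s ∈ S) :
    2 * R * inner ℝ ς (s - x) ≤ ‖ς‖ * ‖s - x‖ ^ 2 := by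
  rcases eq_or_ne ς 0 with rfl | hς₀
  · simp
  have hn : 0 < ‖ς‖ := norm_pos_iff.2 hς₀
  have hunit := hS.two_mul_inner_le_of_norm_le_one hR hx (smul_mem_proxNormalCone hς (inv_pos.2 hn))
    (by rw [norm_smul, norm_inv, norm_norm, inv_mul_cancel₀ hn.ne']) hs
  rw [real_inner_smul_left] at hunit
  calc 2 * R * inner ℝ ς (s - x) = ‖ς‖ * (2 * R * (‖ς‖⁻¹ * inner ℝ ς (s - x))) := by
        field_simp
    _ ≤ ‖ς‖ * ‖s - x‖ ^ 2 := mul_le_mul_of_nonneg_left hunit hn.le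

lemma isProxRegular_of_forall_two_mul_inner_le {R : ℝ} {S : Set H}
    (h : ∀ x ∈ S, ∀ ς ∈ proxNormalCone S x, ∀ s ∈ S,
      2 * R * inner ℝ ς (s - x) ≤ ‖ς‖ * ‖s - x‖ ^ 2) :
    IsProxRegular R S := by
  intro x hx ς hς hς₁ t ht htR
  refine (mem_projSet_add_iff hx _).2 fun s hs => ?_
  rw [real_inner_smul_left, ← mul_assoc]
  rcases le_or_gt (inner ℝ ς (s - x)) 0 with hc | hc
  · exact (mul_nonpos_of_nonneg_of_nonpos (by positivity) hc).trans (sq_nonneg _)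
  · calc 2 * t * inner ℝ ς (s - x) ≤ 2 * R * inner ℝ ς (s - x) := by gcongr
      _ ≤ ‖ς‖ * ‖s - x‖ ^ 2 := h x hx ς hς s hs
      _ ≤ ‖s - x‖ ^ 2 := mul_le_of_le_one_left (sq_nonneg _) hς₁

lemma isProxRegular_iff_forall_two_mul_inner_le {R : ℝ} (hR : 0 < R) {S : Set H} :
    IsProxRegular R S ↔ ∀ x ∈ S, ∀ ς ∈ proxNormalCone S x, ∀ s ∈ S,
      2 * R * inner ℝ ς (s - x) ≤ ‖ς‖ * ‖s - x‖ ^ 2 :=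
  ⟨fun hS _ hx _ hς _ hs => hS.two_mul_inner_le hR hx hς hs,
    isProxRegular_of_forall_two_mul_inner_le⟩

theorem stmt3_general (R : ℝ) (hR : 0 < R) (S : Set H) :
    IsProxRegular R S ↔
      ∀ x₁ ∈ S, ∀ x₂ ∈ S, ∀ ς₁ ∈ proxNormalCone S x₁, ∀ ς₂ ∈ proxNormalCone S x₂,
        (inner ℝ (ς₂ - ς₁) (x₂ - x₁) : ℝ) ≥
          -(1/2) * ((‖ς₂‖ + ‖ς₁‖) / R) * ‖x₂ - x₁‖ ^ 2 := by
  rw [isProxRegular_iff_forall_two_mul_inner_le hR]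
  constructor
  · intro h x₁ hx₁ x₂ hx₂ ς₁ hς₁ ς₂ hς₂
    have h₁ := h x₁ hx₁ ς₁ hς₁ x₂ hx₂
    have h₂ := h x₂ hx₂ ς₂ hς₂ x₁ hx₁
    rw [norm_sub_rev, ← neg_sub x₂ x₁, inner_neg_right] at h₂
    rw [inner_sub_left, ge_iff_le, ← mul_le_mul_iff_of_pos_left (by positivity : 0 < 2 * R)]
    field_simp
    linarith
  · intro h x hx ς hς s hs
    have := h s hs x hx 0 (zero_mem_proxNormalCone hs) ς hς
    rw [sub_zero, norm_zero, add_zero, ← neg_sub s x, inner_neg_right, norm_neg,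
      ge_iff_le, ← mul_le_mul_iff_of_pos_left (by positivity : 0 < 2 * R)] at this
    field_simp at this
    linarith

theorem stmt3 [CompleteSpace H] (R : ℝ) (hR : 0 < R) (S : Set H)
    (hne : S.Nonempty) (hcl : IsClosed S) :
    IsProxRegular R S ↔
      ∀ x₁ ∈ S, ∀ x₂ ∈ S, ∀ ς₁ ∈ proxNormalCone S x₁, ∀ ς₂ ∈ proxNormalCone S x₂,
        (inner ℝ (ς₂ - ς₁) (x₂ - x₁) : ℝ) ≥
          -(1/2) * ((‖ς₂‖ + ‖ς₁‖) / R) * ‖x₂ - x₁‖ ^ 2 :=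
  stmt3_general R hR S
end

section
/- Let (𝔗, 𝒯) be a measurable space with 𝒯 complete with respect to a σ-finite positive measure, let Y be a complete separable metric space, let Γ₁ : 𝔗 ⇉ Y be a 𝒯-measurable multimapping with nonempty closed values, and let Γ₂ : 𝔗 ⇉ Y have nonempty values with graph in 𝒯 ⊗ ℬ(Y). Then for any 𝒯-measurable selection z(·) of Γ₁(·) + Γ₂(·) (where Y is a separable Banach space for the sum), there exist 𝒯-measurable selections z₁ of Γ₁ and z₂ of Γ₂ such that z(t) = z₁(t) + z₂(t) for all t ∈ 𝔗. -/
/-!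
Replacing `Γ₁` by `{y ∈ Γ₁ t | z t - y ∈ Γ₂ t}`, whose graph is product-measurable (the graph
of a closed-valued measurable multimapping is), it suffices to select measurably from a set
`G ∈ 𝒯 ⊗ ℬ(Y)` with nonempty sections, and to put `z₂ = z - z₁`.

That is the von Neumann–Aumann theorem. `G` is obtained by the Souslin operation from rectangles
`T s ×ˢ C s` with `T s ∈ 𝒯` and `C s` closed, and the `C s` can be made nested along branches with
radii `2⁻ⁿ`. The projections to `𝔗` of the subtrees of this scheme are Souslin sets over `𝒯`,
hence in `𝒯` by Marczewski's theorem. Choosing at every node the least child whose subtree still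
contains `t` gives a measurable branch `b t`, and the limit of points of `C (b t|n)` is a
measurable selection.

Marczewski's theorem reduces to a finite measure with the same null sets. There the
approximations of a Souslin set `A` by branches bounded by `g` exhaust the outer measure of `A`
as `g` grows, and by compactness of `{f | f ≤ g}` they are squeezed by measurable subsets of `A`.
-/

open Set Filter MeasureTheory Topology
open scoped ENNReal

namespace Souslin

variable {α : Type*}

def pref (f : ℕ → ℕ) (n : ℕ) : List ℕ := List.ofFn fun i : Fin n => f i

@[simp] lemma length_pref (f : ℕ → ℕ) (n : ℕ) : (pref f n).length = n := List.length_ofFn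

@[simp] lemma getElem_pref (f : ℕ → ℕ) (n i : ℕ) (h : i < (pref f n).length) :
    (pref f n)[i] = f i := by
  simp [pref]

@[simp] lemma pref_zero (f : ℕ → ℕ) : pref f 0 = [] := rfl

lemma pref_succ (f : ℕ → ℕ) (n : ℕ) : pref f (n + 1) = pref f n ++ [f n] := by
  rw [pref, List.ofFn_succ', List.concat_eq_append]; rfl

lemma pref_succ' (f : ℕ → ℕ) (n : ℕ) : pref f (n + 1) = f 0 :: pref (fun i => f (i + 1)) n := by
  simp [pref, List.ofFn_succ]

lemma pref_congr {f g : ℕ → ℕ} {n : ℕ} (h : ∀ i < n, f i = g i) : pref f n = pref g n :=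
  List.ofFn_inj.2 <| funext fun i => h i i.2

lemma pref_map (g f : ℕ → ℕ) (n : ℕ) : (pref f n).map g = pref (g ∘ f) n := List.map_ofFn

lemma getD_pref (f : ℕ → ℕ) {i n : ℕ} (h : i < n) : (pref f n).getD i 0 = f i := by
  simp [List.getElem?_eq_getElem (show i < (pref f n).length by simpa using h)]

lemma eq_pref_of_prefix {t : List ℕ} {f : ℕ → ℕ} {n : ℕ} (h : t <+: pref f n) :
    t = pref f t.length :=
  List.ext_getElem (by simp) fun i hi _ => by simp [h.getElem hi]

lemma pref_prefix (f : ℕ → ℕ) {m n : ℕ} (h : m ≤ n) : pref f m <+: pref f n := by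
  induction n, h using Nat.le_induction with
  | base => exact List.prefix_refl _
  | succ n _ ih => exact ih.trans (pref_succ f n ▸ List.prefix_append _ _)

lemma isClosed_setOf_pref (P : List ℕ → Prop) (n : ℕ) : IsClosed {f : ℕ → ℕ | P (pref f n)} :=
  (isClosed_discrete {v : Fin n → ℕ | P (List.ofFn v)}).preimage
    (f := fun (f : ℕ → ℕ) (i : Fin n) => f i) (by fun_prop)

lemma measurable_comp_pref [MeasurableSpace α] {β : Type*} [MeasurableSpace β]
    {b : α → ℕ → ℕ} (hb : Measurable b) (c : List ℕ → β) (n : ℕ) :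
    Measurable fun x => c (pref (b x) n) :=
  (measurable_of_countable fun v : Fin n → ℕ => c (List.ofFn v)).comp <|
    measurable_pi_lambda _ fun _ => (measurable_pi_apply _).comp hb

def branch (next : List ℕ → ℕ) (n : ℕ) : ℕ := next (List.ofFn fun i : Fin n => branch next i)
termination_by n
decreasing_by exact i.2

lemma branch_eq (next : List ℕ → ℕ) (n : ℕ) : branch next n = next (pref (branch next) n) := by
  rw [branch]; rfl

lemma pref_branch_succ (next : List ℕ → ℕ) (n : ℕ) :
    pref (branch next) (n + 1) = pref (branch next) n ++ [next (pref (branch next) n)] := by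
  rw [pref_succ, branch_eq next n]

lemma forall_pref_branch {P : List ℕ → Prop} {next : List ℕ → ℕ} (h0 : P [])
    (hnext : ∀ s, P s → P (s ++ [next s])) (n : ℕ) : P (pref (branch next) n) := by
  induction n with
  | zero => exact h0
  | succ n ih => exact pref_branch_succ next n ▸ hnext _ ih

lemma exists_forall_pref {P : List ℕ → Prop} (h0 : P []) (hstep : ∀ s, P s → ∃ j, P (s ++ [j])) :
    ∃ f : ℕ → ℕ, ∀ n, P (pref f n) := by
  have : ∀ s, ∃ j, P s → P (s ++ [j]) := fun s => by
    by_cases hs : P s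
    exacts [(hstep s hs).imp fun _ h _ => h, ⟨0, fun h => absurd h hs⟩]
  choose next hnext using this
  exact ⟨branch next, forall_pref_branch h0 hnext⟩

lemma measurable_branch [MeasurableSpace α] {next : α → List ℕ → ℕ}
    (hnext : ∀ s, Measurable fun x => next x s) : Measurable fun x => branch (next x) := by
  refine measurable_pi_iff.2 fun n => ?_
  induction n using Nat.strong_induction_on with
  | _ n ih =>
    simp_rw [branch_eq, pref]
    have hpref : Measurable fun x (i : Fin n) => branch (next x) i :=
      measurable_pi_lambda _ fun i => ih i i.2
    exact (measurable_from_prod_countable_left (f := fun p : α × (Fin n → ℕ) => next p.1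
      (List.ofFn p.2)) fun v => hnext (List.ofFn v)).comp (measurable_id.prodMk hpref)

end Souslin

open Souslin

def souslin {α : Type*} (S : List ℕ → Set α) : Set α := {x | ∃ f : ℕ → ℕ, ∀ n, x ∈ S (pref f n)}

namespace Souslin

variable {α : Type*}

lemma souslin_const (K : Set α) : souslin (fun _ => K) = K :=
  Set.ext fun _ => ⟨fun ⟨_, h⟩ => h 0, fun h => ⟨fun _ => 0, fun _ => h⟩⟩

lemma mem_souslin_cons_iff {K : Set α} {R : ℕ → List ℕ → Set α} (hK : ∀ k, R k [] ⊆ K) {x : α} :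
    x ∈ souslin (fun s => s.casesOn K R) ↔ ∃ k, x ∈ souslin (R k) := by
  constructor
  · rintro ⟨f, hf⟩
    exact ⟨f 0, fun i => f (i + 1), fun n => by simpa [pref_succ'] using hf (n + 1)⟩
  · rintro ⟨k, g, hg⟩
    refine ⟨fun n => n.casesOn k g, fun n => ?_⟩
    cases n with
    | zero => exact hK k (hg 0)
    | succ n => simpa [pref_succ'] using hg n

lemma souslin_append_subset (S : List ℕ → Set α) (s : List ℕ) :
    souslin (fun v => S (s ++ v)) ⊆ S s :=
  fun _ ⟨f, hf⟩ => by simpa using hf 0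

lemma exists_mem_souslin_append_singleton {S : List ℕ → Set α} {s : List ℕ} {x : α}
    (hx : x ∈ souslin fun v => S (s ++ v)) : ∃ j, x ∈ souslin fun v => S (s ++ [j] ++ v) := by
  obtain ⟨f, hf⟩ := hx
  exact ⟨f 0, fun i => f (i + 1), fun n => by simpa [pref_succ'] using hf (n + 1)⟩

def IsRegular (S : List ℕ → Set α) : Prop := ∀ ⦃s t : List ℕ⦄, s <+: t → S t ⊆ S s

def regularize (S : List ℕ → Set α) (s : List ℕ) : Set α := ⋂ (t : List ℕ) (_ : t <+: s), S t

lemma isRegular_regularize (S : List ℕ → Set α) : IsRegular (regularize S) :=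
  fun _ _ hst _ hx => mem_iInter₂.2 fun t hts => mem_iInter₂.1 hx t (hts.trans hst)

lemma regularize_subset (S : List ℕ → Set α) (s : List ℕ) : regularize S s ⊆ S s :=
  fun _ hx => mem_iInter₂.1 hx s (List.prefix_refl s)

lemma measurableSet_regularize [MeasurableSpace α] {S : List ℕ → Set α}
    (hS : ∀ s, MeasurableSet (S s)) (s : List ℕ) : MeasurableSet (regularize S s) :=
  .iInter fun t => .iInter fun _ => hS t

lemma forall_mem_regularize_pref_iff {S : List ℕ → Set α} {f : ℕ → ℕ} {x : α} :
    (∀ n, x ∈ regularize S (pref f n)) ↔ ∀ n, x ∈ S (pref f n) :=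
  ⟨fun h n => regularize_subset S _ (h n), fun h _ => mem_iInter₂.2 fun t ht =>
    (eq_pref_of_prefix ht).symm ▸ h t.length⟩

lemma souslin_regularize (S : List ℕ → Set α) : souslin (regularize S) = souslin S := by
  ext x
  exact exists_congr fun f => forall_mem_regularize_pref_iff

lemma souslin_prod_regularize {β : Type*} (T : List ℕ → Set α) (C : List ℕ → Set β) :
    souslin (fun s => T s ×ˢ regularize C s) = souslin fun s => T s ×ˢ C s := by
  ext x
  simp only [souslin, mem_ofPred_eq, mem_prod, forall_and, forall_mem_regularize_pref_iff]

/-! ### Marczewski's theorem -/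

def souslinBelow (S : List ℕ → Set α) (s : List ℕ) : Set α :=
  {x | ∃ f : ℕ → ℕ, (∀ i (hi : i < s.length), f i ≤ s[i]) ∧ ∀ n, x ∈ S (pref f n)}

lemma souslinBelow_nil (S : List ℕ → Set α) : souslinBelow S [] = souslin S := by
  simp [souslinBelow, souslin]

lemma souslinBelow_append_mono (S : List ℕ → Set α) (s : List ℕ) :
    Monotone fun j => souslinBelow S (s ++ [j]) := by
  rintro j j' hj x ⟨f, hf, hx⟩
  refine ⟨f, fun i hi => ?_, hx⟩
  have := hf i (by simpa using hi)
  grind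

lemma iUnion_souslinBelow_append (S : List ℕ → Set α) (s : List ℕ) :
    ⋃ j, souslinBelow S (s ++ [j]) = souslinBelow S s := by
  ext x
  simp only [mem_iUnion, souslinBelow, mem_ofPred_eq]
  constructor
  · rintro ⟨j, f, hf, hx⟩
    refine ⟨f, fun i hi => ?_, hx⟩
    have := hf i (by simp; omega)
    grind
  · rintro ⟨f, hf, hx⟩
    refine ⟨f s.length, f, fun i hi => ?_, hx⟩
    rcases lt_or_ge i s.length with his | his
    · have := hf i his
      grind
    · grind

lemma souslinBelow_pref_subset (S : List ℕ → Set α) (g : ℕ → ℕ) (k : ℕ) :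
    souslinBelow S (pref g k) ⊆ ⋃ f ∈ univ.pi fun i => Iic (g i), S (pref f k) := by
  rintro x ⟨f, hf, hx⟩
  refine mem_biUnion (x := f ⊓ g) (fun i _ => inf_le_right (a := f i)) ?_
  have : pref (f ⊓ g) k = pref f k :=
    pref_congr fun i hi => inf_eq_left.2 <| by
      have := hf i (by simpa using hi)
      rwa [getElem_pref] at this
  exact this ▸ hx k

lemma iInter_biUnion_pref_subset_souslin {S : List ℕ → Set α} (hS : IsRegular S) (g : ℕ → ℕ) :
    ⋂ k, ⋃ f ∈ univ.pi (fun i => Iic (g i)), S (pref f k) ⊆ souslin S := by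
  intro x hx
  have hbox : IsCompact (univ.pi fun i => Iic (g i)) :=
    isCompact_univ_pi fun i => (finite_Iic _).isCompact
  obtain ⟨f, hf⟩ := IsCompact.nonempty_iInter_of_sequence_nonempty_isCompact_isClosed
    (fun k => (univ.pi fun i => Iic (g i)) ∩ {f | x ∈ S (pref f k)})
    (fun k => inter_subset_inter_right _ fun f hf => hS (pref_prefix f k.le_succ) hf)
    (fun k => by simpa [inter_comm, Set.Nonempty] using mem_iInter.1 hx k)
    (hbox.inter_right (isClosed_setOf_pref (fun s => x ∈ S s) 0))
    (fun k => hbox.isClosed.inter (isClosed_setOf_pref (fun s => x ∈ S s) k))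
  exact ⟨f, fun k => (mem_iInter.1 hf k).2⟩

variable [MeasurableSpace α]

lemma exists_lt_measure_souslinBelow_append (μ : Measure α) [IsFiniteMeasure μ]
    (S : List ℕ → Set α) (s : List ℕ) {δ : ℝ≥0∞} (hδ : δ ≠ 0) :
    ∃ j, μ (souslinBelow S s) ≤ μ (souslinBelow S (s ++ [j])) + δ := by
  have hsup : μ (souslinBelow S s) = ⨆ j, μ (souslinBelow S (s ++ [j])) := by
    rw [← iUnion_souslinBelow_append, (souslinBelow_append_mono S s).measure_iUnion]
  have : μ (souslinBelow S s) < ⨆ j, (μ (souslinBelow S (s ++ [j])) + δ) := by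
    rw [← ENNReal.iSup_add, ← hsup]
    exact ENNReal.lt_add_right (measure_ne_top μ _) hδ
  obtain ⟨j, hj⟩ := lt_iSup_iff.1 this
  exact ⟨j, hj.le⟩

lemma exists_measurableSet_subset_souslin (μ : Measure α) [IsFiniteMeasure μ]
    {S : List ℕ → Set α} (hS : IsRegular S) (hSm : ∀ s, MeasurableSet (S s)) {ε : ℝ≥0∞}
    (hε : ε ≠ 0) : ∃ K ⊆ souslin S, MeasurableSet K ∧ μ (souslin S \ K) ≤ ε := by
  obtain ⟨δ, hδ, hδε⟩ := ENNReal.exists_pos_sum_of_countable hε ℕ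
  obtain ⟨g, hg⟩ := exists_forall_pref (P := fun s => μ (souslin S) ≤
      μ (souslinBelow S s) + ∑ i ∈ Finset.range s.length, (δ i : ℝ≥0∞))
    (by simp [souslinBelow_nil]) fun s hs => by
      obtain ⟨j, hj⟩ := exists_lt_measure_souslinBelow_append μ S s
        (ENNReal.coe_ne_zero.2 (hδ s.length).ne')
      refine ⟨j, hs.trans ?_⟩
      rw [List.length_append, List.length_singleton, Finset.sum_range_succ]
      calc _ ≤ μ (souslinBelow S (s ++ [j])) + δ s.length +
            ∑ i ∈ Finset.range s.length, (δ i : ℝ≥0∞) := by gcongr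
        _ = _ := by ring
  set B : ℕ → Set α := fun k => ⋃ f ∈ univ.pi fun i => Iic (g i), S (pref f k)
  have hBm : ∀ k, MeasurableSet (B k) := fun k => by
    simp only [B, ← biUnion_image (f := fun f => pref f k) (g := S)]
    exact .biUnion (to_countable _) fun t _ => hSm t
  have hBanti : Antitone B := antitone_nat_of_succ_le fun k =>
    biUnion_mono subset_rfl fun f _ => hS (pref_prefix f k.le_succ)
  have hK : μ (souslin S) ≤ μ (⋂ k, B k) + ε := by
    rw [hBanti.measure_iInter (fun k => (hBm k).nullMeasurableSet) ⟨0, measure_ne_top μ _⟩,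
      ENNReal.iInf_add]
    refine le_iInf fun k => (hg k).trans ?_
    gcongr
    · exact souslinBelow_pref_subset S g k
    · simpa using (ENNReal.sum_le_tsum _).trans hδε.le
  have hKsub : ⋂ k, B k ⊆ souslin S := iInter_biUnion_pref_subset_souslin hS g
  refine ⟨⋂ k, B k, hKsub, .iInter hBm,
    ENNReal.le_of_add_le_add_left (measure_ne_top μ (⋂ k, B k)) ?_⟩
  calc μ (⋂ k, B k) + μ (souslin S \ ⋂ k, B k)
      = μ (souslin S ∩ ⋂ k, B k) + μ (souslin S \ ⋂ k, B k) := by rw [inter_eq_right.2 hKsub]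
    _ = μ (souslin S) := measure_inter_add_sdiff _ (.iInter hBm)
    _ ≤ μ (⋂ k, B k) + ε := hK

end Souslin

lemma MeasureTheory.nullMeasurableSet_of_forall_measure_diff_le {α : Type*} [MeasurableSpace α]
    {μ : Measure α} {A : Set α}
    (h : ∀ ε ≠ 0, ∃ K ⊆ A, MeasurableSet K ∧ μ (A \ K) ≤ ε) : NullMeasurableSet A μ := by
  choose K hKA hKm hK using fun n : ℕ => h (n : ℝ≥0∞)⁻¹ (ENNReal.inv_ne_zero.2 (by simp))
  have hnull : μ (A \ ⋃ n, K n) = 0 := nonpos_iff_eq_zero.1 <|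
    ge_of_tendsto' ENNReal.tendsto_inv_nat_nhds_zero fun n =>
      (measure_mono (sdiff_subset_sdiff_right (subset_iUnion K n))).trans (hK n)
  rw [← union_sdiff_cancel (iUnion_subset hKA)]
  exact (MeasurableSet.iUnion hKm).nullMeasurableSet.union (.of_null hnull)

theorem MeasureTheory.measurableSet_souslin {α : Type*} [MeasurableSpace α] (μ : Measure α)
    [SFinite μ] [μ.IsComplete] {S : List ℕ → Set α} (hS : ∀ s, MeasurableSet (S s)) :
    MeasurableSet (souslin S) := by
  rw [← souslin_regularize]
  have : NullMeasurableSet (souslin (regularize S)) μ.toFinite :=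
    nullMeasurableSet_of_forall_measure_diff_le fun _ hε =>
      exists_measurableSet_subset_souslin _ (isRegular_regularize S)
        (measurableSet_regularize hS) hε
  exact (this.mono_ac (absolutelyContinuous_toFinite μ)).measurable_of_complete

/-! ### Product-measurable sets as Souslin sets of rectangles -/

def IsSouslin {α : Type*} (𝒦 : Set (Set α)) (A : Set α) : Prop :=
  ∃ S : List ℕ → Set α, (∀ s, S s ∈ 𝒦) ∧ souslin S = A

namespace IsSouslin

variable {α : Type*} {𝒦 : Set (Set α)}

lemma of_mem {K : Set α} (hK : K ∈ 𝒦) : IsSouslin 𝒦 K :=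
  ⟨fun _ => K, fun _ => hK, souslin_const K⟩

lemma iUnion (huniv : univ ∈ 𝒦) {ι : Type*} [Countable ι] [Nonempty ι] {A : ι → Set α}
    (hA : ∀ i, IsSouslin 𝒦 (A i)) : IsSouslin 𝒦 (⋃ i, A i) := by
  choose R hR hRA using hA
  obtain ⟨e, he⟩ := exists_surjective_nat ι
  refine ⟨fun s => s.casesOn univ fun k => R (e k), fun s => ?_, ?_⟩
  · cases s with
    | nil => exact huniv
    | cons k s => exact hR (e k) s
  · ext x
    rw [mem_souslin_cons_iff fun _ => subset_univ _, mem_iUnion, he.exists]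
    simp only [hRA]

lemma iInter (h𝒦 : ∀ 𝒞 ⊆ 𝒦, 𝒞.Countable → ⋂₀ 𝒞 ∈ 𝒦) {A : ℕ → Set α}
    (hA : ∀ k, IsSouslin 𝒦 (A k)) : IsSouslin 𝒦 (⋂ k, A k) := by
  choose R hR hRA using hA
  -- the branch `f` of the new scheme runs through the branches `i ↦ f (Nat.pair k i)` of all `R k`
  refine ⟨fun s => ⋂ q : {q : ℕ × ℕ // ∀ i < q.2, Nat.pair q.1 i < s.length},
    R q.1.1 (pref (fun i => s.getD (Nat.pair q.1.1 i) 0) q.1.2), fun s => ?_, ?_⟩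
  · dsimp only
    rw [← sInter_range]
    exact h𝒦 _ (range_subset_iff.2 fun q => hR _ _) (countable_range _)
  ext x
  simp only [souslin, mem_iInter, mem_ofPred_eq, ← hRA]
  constructor
  · rintro ⟨f, hf⟩ k
    refine ⟨fun i => f (Nat.pair k i), fun m => ?_⟩
    have hlt : ∀ i < m, Nat.pair k i < Nat.pair k m := fun i => Nat.pair_lt_pair_right k
    have := hf (Nat.pair k m) ⟨(k, m), by simpa using hlt⟩
    rwa [pref_congr fun i hi => getD_pref f (hlt i hi)] at this
  · intro hx
    choose F hF using hx
    refine ⟨fun j => F j.unpair.1 j.unpair.2, fun N q => ?_⟩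
    obtain ⟨⟨k, m⟩, hq⟩ := q
    simp only [length_pref] at hq
    convert hF k m using 2
    refine pref_congr fun i hi => ?_
    rw [getD_pref _ (hq i hi), Nat.unpair_pair]

theorem of_measurableSet_generateFrom (h𝒦 : ∀ 𝒞 ⊆ 𝒦, 𝒞.Countable → ⋂₀ 𝒞 ∈ 𝒦)
    (hcompl : ∀ K ∈ 𝒦, IsSouslin 𝒦 Kᶜ) {A : Set α}
    (hA : MeasurableSet[MeasurableSpace.generateFrom 𝒦] A) : IsSouslin 𝒦 A := by
  have huniv : univ ∈ 𝒦 := by simpa using h𝒦 ∅ (empty_subset _) countable_empty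
  refine (MeasurableSpace.generateFrom_induction 𝒦 (fun A _ => IsSouslin 𝒦 A ∧ IsSouslin 𝒦 Aᶜ)
    (fun K hK _ => ⟨of_mem hK, hcompl K hK⟩) ?_ (fun A _ h => ⟨h.2, by rw [compl_compl]; exact h.1⟩)
    (fun A _ h => ⟨iUnion huniv fun n => (h n).1, ?_⟩) A hA).1
  · exact ⟨by simpa using hcompl _ huniv, by simpa using of_mem huniv⟩
  · rw [compl_iUnion]
    exact iInter h𝒦 fun n => (h n).2

end IsSouslin

section Rectangles

variable {𝔗 Y : Type*} [MeasurableSpace 𝔗]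

lemma sInter_mem_measurableSet_prod_isClosed [TopologicalSpace Y] {𝒞 : Set (Set (𝔗 × Y))}
    (h𝒞 : 𝒞 ⊆ image2 (· ×ˢ ·) {A | MeasurableSet A} {F | IsClosed F}) (hc : 𝒞.Countable) :
    ⋂₀ 𝒞 ∈ image2 (· ×ˢ ·) {A : Set 𝔗 | MeasurableSet A} {F : Set Y | IsClosed F} := by
  have := hc.to_subtype
  choose A hA F hF hAF using fun K : 𝒞 => h𝒞 K.2
  refine ⟨⋂ K, A K, .iInter hA, ⋂ K, F K, isClosed_iInter hF, ?_⟩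
  ext p
  simp only [sInter_eq_iInter, mem_prod, mem_iInter, ← hAF, forall_and]

theorem exists_souslin_prod_of_measurableSet [PseudoEMetricSpace Y] [MeasurableSpace Y]
    [BorelSpace Y] {G : Set (𝔗 × Y)} (hG : MeasurableSet G) :
    ∃ (T : List ℕ → Set 𝔗) (C : List ℕ → Set Y), (∀ s, MeasurableSet (T s)) ∧
      (∀ s, IsClosed (C s)) ∧ souslin (fun s => T s ×ˢ C s) = G := by
  set 𝒦 := image2 (· ×ˢ ·) {A : Set 𝔗 | MeasurableSet A} {F : Set Y | IsClosed F}
  have hgen : MeasurableSpace.generateFrom 𝒦 = Prod.instMeasurableSpace :=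
    generateFrom_eq_prod MeasurableSpace.generateFrom_measurableSet
      (borel_eq_generateFrom_isClosed.symm.trans BorelSpace.measurable_eq.symm)
      isCountablySpanning_measurableSet ⟨fun _ => univ, fun _ => isClosed_univ, iUnion_const _⟩
  have hcompl : ∀ K ∈ 𝒦, IsSouslin 𝒦 Kᶜ := by
    rintro _ ⟨A, hA, F, hF, rfl⟩
    obtain ⟨F', hF'cl, -, hF'U, -⟩ := hF.isOpen_compl.exists_iUnion_isClosed
    have : (A ×ˢ F)ᶜ = ⋃ o : Option ℕ, o.elim (Aᶜ ×ˢ univ) fun n => univ ×ˢ F' n := by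
      rw [iUnion_option, compl_prod_eq_union, ← hF'U, prod_iUnion]; rfl
    have huniv : univ ∈ 𝒦 := ⟨univ, .univ, univ, isClosed_univ, univ_prod_univ⟩
    rw [this]
    refine .iUnion huniv fun o => .of_mem ?_
    cases o with
    | none => exact ⟨Aᶜ, hA.compl, univ, isClosed_univ, rfl⟩
    | some n => exact ⟨univ, .univ, F' n, hF'cl n, rfl⟩
  obtain ⟨R, hR, rfl⟩ := IsSouslin.of_measurableSet_generateFrom
    (fun _ => sInter_mem_measurableSet_prod_isClosed) hcompl (hgen ▸ hG)
  choose T hT C hC hTC using hR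
  exact ⟨T, C, hT, hC, by simp only [hTC]⟩

end Rectangles

/-! ### Measurable selection -/

theorem MeasureTheory.exists_measurable_branch {α : Type*} [MeasurableSpace α] (μ : Measure α)
    [SFinite μ] [μ.IsComplete] {S : List ℕ → Set α} (hS : ∀ s, MeasurableSet (S s)) :
    ∃ b : α → ℕ → ℕ, Measurable b ∧ ∀ x ∈ souslin S, ∀ n, x ∈ S (pref (b x) n) := by
  classical
  set L : List ℕ → Set α := fun s => souslin fun v => S (s ++ v)
  have hL : ∀ s, MeasurableSet (L s) := fun s => measurableSet_souslin μ fun v => hS _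
  -- `Nat.find` picks the least child of `s` whose subtree still contains `x`, if `x ∈ L s`
  have hnext : ∀ x s, ∃ j, x ∈ L s → x ∈ L (s ++ [j]) := fun x s => by
    by_cases hx : x ∈ L s
    · exact (exists_mem_souslin_append_singleton hx).imp fun j h _ => by simpa [L] using h
    · exact ⟨0, fun h => absurd h hx⟩
  refine ⟨fun x => branch fun s => Nat.find (hnext x s),
    measurable_branch fun s => measurable_find _ fun j => ?_, fun x hx n =>
      souslin_append_subset S _ (forall_pref_branch (P := (x ∈ L ·)) (by simpa [L] using hx)
        (fun s => Nat.find_spec (hnext x s)) n)⟩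
  simp only [imp_iff_not_or]
  exact (hL s).compl.union (hL (s ++ [j]))

lemma Souslin.exists_tendsto_of_isRegular {Y : Type*} [PseudoMetricSpace Y] [CompleteSpace Y]
    {C : List ℕ → Set Y} (hC : IsRegular C) (hcl : ∀ s, IsClosed (C s))
    (hsmall : ∀ s j, ∃ a, C (s ++ [j]) ⊆ Metric.closedBall a ((1 / 2) ^ s.length))
    {c : List ℕ → Y} {f : ℕ → ℕ} (hc : ∀ n, c (pref f n) ∈ C (pref f n)) :
    ∃ y, Tendsto (fun n => c (pref f n)) atTop (𝓝 y) ∧ ∀ n, y ∈ C (pref f n) := by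
  have hmem : ∀ m n, m ≤ n → c (pref f n) ∈ C (pref f m) := fun m n h =>
    hC (pref_prefix f h) (hc n)
  have hdist : ∀ n, dist (c (pref f (n + 1))) (c (pref f (n + 1 + 1))) ≤ 4 / 2 / 2 ^ n := by
    intro n
    obtain ⟨a, ha⟩ := hsmall (pref f n) (f n)
    rw [← pref_succ, length_pref] at ha
    calc _ ≤ dist (c (pref f (n + 1))) a + dist (c (pref f (n + 1 + 1))) a :=
          dist_triangle_right _ _ _
      _ ≤ (1 / 2) ^ n + (1 / 2) ^ n :=
          add_le_add (ha (hc _)) (ha (hmem _ _ (Nat.le_succ _)))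
      _ = 4 / 2 / 2 ^ n := by rw [one_div_pow]; ring
  obtain ⟨y, hy⟩ := cauchySeq_tendsto_of_complete (cauchySeq_of_le_geometric_two hdist)
  have hy' := (tendsto_add_atTop_iff_nat (f := fun n => c (pref f n)) 1).1 hy
  exact ⟨y, hy', fun m => (hcl _).mem_of_tendsto hy' (eventually_atTop.2 ⟨m, hmem m⟩)⟩

section Selection

variable {𝔗 Y : Type*} [MeasurableSpace 𝔗] [PseudoMetricSpace Y] [MeasurableSpace Y]
  [BorelSpace Y]

theorem exists_souslin_prod_shrinking [TopologicalSpace.SeparableSpace Y] [Nonempty Y]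
    {G : Set (𝔗 × Y)} (hG : MeasurableSet G) :
    ∃ (T : List ℕ → Set 𝔗) (C : List ℕ → Set Y), (∀ s, MeasurableSet (T s)) ∧
      (∀ s, IsClosed (C s)) ∧ IsRegular C ∧
      (∀ s j, ∃ a, C (s ++ [j]) ⊆ Metric.closedBall a ((1 / 2) ^ s.length)) ∧
      souslin (fun s => T s ×ˢ C s) = G := by
  obtain ⟨T, C, hT, hC, rfl⟩ := exists_souslin_prod_of_measurableSet hG
  obtain ⟨u, hu⟩ := TopologicalSpace.exists_dense_seq Y
  -- a code `j` at depth `i` of the new scheme stands for the code `j.unpair.1` of the old one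
  -- together with the ball `closedBall (u j.unpair.2) ((1 / 2) ^ i)`
  set old : List ℕ → List ℕ := List.map fun j => j.unpair.1
  set C₁ : List ℕ → Set Y := fun s =>
    C (old s) ∩ ⋂ i : Fin s.length, Metric.closedBall (u s[i].unpair.2) ((1 / 2) ^ (i : ℕ))
  refine ⟨fun s => T (old s), regularize C₁, fun s => hT _,
    fun s => isClosed_iInter fun t => isClosed_iInter fun _ =>
      (hC _).inter (isClosed_iInter fun _ => Metric.isClosed_closedBall),
    isRegular_regularize C₁, fun s j => ⟨u j.unpair.2, fun y hy => ?_⟩, ?_⟩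
  · have := mem_iInter.1 (regularize_subset C₁ _ hy).2 ⟨s.length, by simp⟩
    simpa using this
  rw [souslin_prod_regularize]
  ext ⟨t, y⟩
  simp only [souslin, mem_ofPred_eq, mem_prod, C₁, mem_inter_iff, old, pref_map]
  constructor
  · rintro ⟨f, hf⟩
    exact ⟨_, fun n => ⟨(hf n).1, (hf n).2.1⟩⟩
  · rintro ⟨f, hf⟩
    choose I hI using fun i : ℕ => Metric.denseRange_iff.1 hu y ((1 / 2) ^ i) (by positivity)
    refine ⟨fun i => Nat.pair (f i) (I i), fun n => ?_⟩
    simp only [Function.comp_def, Nat.unpair_pair]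
    refine ⟨(hf n).1, (hf n).2, mem_iInter.2 fun i => ?_⟩
    simpa using (hI i).le

theorem MeasureTheory.exists_measurable_selection (μ : Measure 𝔗) [SFinite μ] [μ.IsComplete]
    [CompleteSpace Y] [TopologicalSpace.SeparableSpace Y] {G : Set (𝔗 × Y)}
    (hG : MeasurableSet G) (hne : ∀ t, ∃ y, (t, y) ∈ G) :
    ∃ σ : 𝔗 → Y, Measurable σ ∧ ∀ t, (t, σ t) ∈ G := by
  rcases isEmpty_or_nonempty Y with hY | hY
  · exact ⟨fun t => (hne t).choose, measurable_of_subsingleton_codomain _,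
      fun t => (hne t).choose_spec⟩
  obtain ⟨T, C, hT, hC, hCreg, hsmall, rfl⟩ := exists_souslin_prod_shrinking hG
  set S : List ℕ → Set 𝔗 := fun s => T s ∩ {_t | (C s).Nonempty}
  obtain ⟨b, hb, hbS⟩ := exists_measurable_branch μ (S := S) fun s => (hT s).inter (.const _)
  have hbS' : ∀ t n, t ∈ S (pref (b t) n) := fun t => by
    obtain ⟨y, f, hf⟩ := hne t
    exact hbS t ⟨f, fun n => ⟨(hf n).1, _, (hf n).2⟩⟩
  set c : List ℕ → Y := fun s => Classical.epsilon (· ∈ C s)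
  choose σ hσ hσC using fun t => exists_tendsto_of_isRegular hCreg hC hsmall (c := c)
    fun n => Classical.epsilon_spec (hbS' t n).2
  exact ⟨σ, measurable_of_tendsto_metrizable (fun n => measurable_comp_pref hb c n)
    (tendsto_pi_nhds.2 hσ), fun t => ⟨b t, fun n => ⟨(hbS' t n).1, hσC t n⟩⟩⟩

end Selection

theorem measurableSet_graph_of_isClosed {𝔗 Y : Type*} [MeasurableSpace 𝔗] [PseudoMetricSpace Y]
    [TopologicalSpace.SeparableSpace Y] [MeasurableSpace Y] [OpensMeasurableSpace Y]
    {Γ : 𝔗 → Set Y} (hcl : ∀ t, IsClosed (Γ t))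
    (hmeas : ∀ U : Set Y, IsOpen U → MeasurableSet {t | (Γ t ∩ U).Nonempty}) :
    MeasurableSet {p : 𝔗 × Y | p.2 ∈ Γ p.1} := by
  obtain ⟨D, hDc, hD⟩ := TopologicalSpace.exists_countable_dense Y
  have : {p : 𝔗 × Y | p.2 ∈ Γ p.1} = ⋂ n : ℕ, ⋃ d ∈ D,
      {t | (Γ t ∩ Metric.ball d (1 / (n + 1))).Nonempty} ×ˢ Metric.ball d (1 / (n + 1)) := by
    ext ⟨t, y⟩
    simp only [mem_ofPred_eq, mem_iInter, mem_iUnion, mem_prod, exists_prop]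
    constructor
    · intro hy n
      obtain ⟨d, hd, hyd⟩ := hD.exists_dist_lt y (Nat.one_div_pos_of_nat (α := ℝ) (n := n))
      exact ⟨d, hd, ⟨y, hy, Metric.mem_ball.2 hyd⟩, Metric.mem_ball.2 hyd⟩
    · intro h
      refine (hcl t).closure_subset (Metric.mem_closure_iff.2 fun ε hε => ?_)
      obtain ⟨n, hn⟩ := exists_nat_one_div_lt (half_pos hε)
      obtain ⟨d, -, ⟨w, hw, hwd⟩, hyd⟩ := h n
      refine ⟨w, hw, ?_⟩
      calc dist y w ≤ dist y d + dist w d := dist_triangle_right _ _ _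
        _ < ε / 2 + ε / 2 := add_lt_add ((Metric.mem_ball.1 hyd).trans hn)
            ((Metric.mem_ball.1 hwd).trans hn)
        _ = ε := add_halves ε
  rw [this]
  exact .iInter fun n => .biUnion hDc fun d _ =>
    (hmeas _ Metric.isOpen_ball).prod Metric.isOpen_ball.measurableSet

open MeasureTheory Pointwise

theorem stmt5_general {𝔗 : Type*} [MeasurableSpace 𝔗] (μ : Measure 𝔗) [SigmaFinite μ]
    (hcomp : μ.IsComplete)
    {Y : Type*} [NormedAddCommGroup Y] [MeasurableSpace Y]
    [BorelSpace Y] [SecondCountableTopology Y] [CompleteSpace Y]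
    (Γ₁ Γ₂ : 𝔗 → Set Y)
    (h1cl : ∀ t, IsClosed (Γ₁ t))
    (h1meas : ∀ U : Set Y, IsOpen U → MeasurableSet {t | (Γ₁ t ∩ U).Nonempty})
    (h2graph : MeasurableSet {p : 𝔗 × Y | p.2 ∈ Γ₂ p.1})
    (z : 𝔗 → Y) (hz : Measurable z) (hzsel : ∀ t, z t ∈ Γ₁ t + Γ₂ t) :
    ∃ z₁ z₂ : 𝔗 → Y, Measurable z₁ ∧ Measurable z₂ ∧
      (∀ t, z₁ t ∈ Γ₁ t) ∧ (∀ t, z₂ t ∈ Γ₂ t) ∧ ∀ t, z t = z₁ t + z₂ t := by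
  set G := {p : 𝔗 × Y | p.2 ∈ Γ₁ p.1 ∧ z p.1 - p.2 ∈ Γ₂ p.1}
  have hG : MeasurableSet G := (measurableSet_graph_of_isClosed h1cl h1meas).inter
    (measurable_fst.prodMk ((hz.comp measurable_fst).sub measurable_snd) h2graph)
  have hne : ∀ t, ∃ y, (t, y) ∈ G := fun t => by
    obtain ⟨a, ha, b, hb, hab⟩ := hzsel t
    exact ⟨a, ha, by rwa [← hab, add_sub_cancel_left]⟩
  obtain ⟨z₁, hz₁, hmem⟩ := exists_measurable_selection μ hG hne
  exact ⟨z₁, fun t => z t - z₁ t, hz₁, hz.sub hz₁, fun t => (hmem t).1, fun t => (hmem t).2,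
    fun t => (add_sub_cancel _ _).symm⟩

theorem stmt5 {𝔗 : Type*} [MeasurableSpace 𝔗] (μ : Measure 𝔗) [SigmaFinite μ]
    (hcomp : μ.IsComplete)
    {Y : Type*} [NormedAddCommGroup Y] [NormedSpace ℝ Y] [MeasurableSpace Y]
    [BorelSpace Y] [SecondCountableTopology Y] [CompleteSpace Y]
    (Γ₁ Γ₂ : 𝔗 → Set Y)
    (h1ne : ∀ t, (Γ₁ t).Nonempty) (h1cl : ∀ t, IsClosed (Γ₁ t))
    (h1meas : ∀ U : Set Y, IsOpen U → MeasurableSet {t | (Γ₁ t ∩ U).Nonempty})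
    (h2ne : ∀ t, (Γ₂ t).Nonempty)
    (h2graph : MeasurableSet {p : 𝔗 × Y | p.2 ∈ Γ₂ p.1})
    (z : 𝔗 → Y) (hz : Measurable z) (hzsel : ∀ t, z t ∈ Γ₁ t + Γ₂ t) :
    ∃ z₁ z₂ : 𝔗 → Y, Measurable z₁ ∧ Measurable z₂ ∧
      (∀ t, z₁ t ∈ Γ₁ t) ∧ (∀ t, z₂ t ∈ Γ₂ t) ∧ ∀ t, z t = z₁ t + z₂ t :=
  stmt5_general μ hcomp Γ₁ Γ₂ h1cl h1meas h2graph z hz hzsel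
end

section
/- Let T₀ ≤ T, let k₀, γ : [T₀,T] → ℝ₊ be Lebesgue integrable, and set c(t) := ∫_{T₀}^t k₀(τ) dτ. Then for every integer i ≥ 1 and every t ∈ [T₀,T], ∫_{T₀}^t k₀(s)·(∫_{T₀}^s ([c(s) − c(τ)]^{i−1}/(i−1)!)·γ(τ) dτ) ds = ∫_{T₀}^t ([c(t) − c(s)]^i / i!)·γ(s) ds. -/
/-!
Swapping the order of integration over the triangle `T₀ ≤ τ ≤ s ≤ t` (Fubini) turns the left-hand
side into `∫ γ τ / (i-1)! * ∫_τ^t k₀ s (c s - c τ)^(i-1) ds dτ`. Since `c` is absolutely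
continuous with `c' = k₀` almost everywhere (Lebesgue differentiation), the fundamental theorem of
calculus for absolutely continuous functions evaluates the inner integral as `(c t - c τ)^i / i`.
-/

open MeasureTheory intervalIntegral Set Function

theorem AbsolutelyContinuousOnInterval.pow {f : ℝ → ℝ} {a b : ℝ}
    (hf : AbsolutelyContinuousOnInterval f a b) (n : ℕ) :
    AbsolutelyContinuousOnInterval (fun x => f x ^ n) a b := by
  induction n with
  | zero =>
    simpa using (LipschitzWith.const (1 : ℝ)).lipschitzOnWith.absolutelyContinuousOnInterval
  | succ n ih => simpa only [pow_succ] using ih.fun_mul hf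

theorem integral_mul_primitive_pow {k : ℝ → ℝ} {a b : ℝ} (hk : IntervalIntegrable k volume a b)
    (n : ℕ) :
    ∫ s in a..b, k s * (∫ r in a..s, k r) ^ n = (∫ r in a..b, k r) ^ (n + 1) / (n + 1) := by
  have hFTC := ((hk.absolutelyContinuousOnInterval_intervalIntegral left_mem_uIcc).pow
    (n + 1)).integral_deriv_eq_sub
  have hderiv : ∀ᵐ x, x ∈ uIoc a b → deriv (fun x => (∫ r in a..x, k r) ^ (n + 1)) x =
      (n + 1) * (k x * (∫ r in a..x, k r) ^ n) := by
    filter_upwards [hk.ae_hasDerivAt_integral] with x hx hxI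
    rw [((hx (uIoc_subset_uIcc hxI) a left_mem_uIcc).fun_pow (n + 1)).deriv]
    push_cast
    ring
  rw [integral_congr_ae hderiv, intervalIntegral.integral_const_mul, integral_same,
    zero_pow n.succ_ne_zero, sub_zero] at hFTC
  rw [eq_div_iff (by positivity), mul_comm, hFTC]

theorem integral_integral_swap_triangle {E : Type*} [NormedAddCommGroup E] [NormedSpace ℝ E]
    {H : ℝ → ℝ → E} {a b : ℝ} (hab : a ≤ b)
    (hH : Integrable (uncurry H) ((volume.restrict (Ioc a b)).prod (volume.restrict (Ioc a b)))) :
    ∫ s in a..b, ∫ τ in a..s, H s τ = ∫ τ in a..b, ∫ s in τ..b, H s τ := by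
  set G : ℝ → ℝ → E := fun s τ => {p : ℝ × ℝ | p.2 < p.1}.indicator (uncurry H) (s, τ)
  have hG : Integrable (uncurry G) ((volume.restrict (Ioc a b)).prod (volume.restrict (Ioc a b))) :=
    hH.indicator (measurableSet_lt measurable_snd measurable_fst)
  -- the diagonal `τ = s` is negligible, so the inner integral over `Ioc a s` may be cut at `τ < s`
  have hleft : ∀ s ∈ Ioc a b, ∫ τ in a..s, H s τ = ∫ τ in Ioc a b, G s τ := fun s hs => by
    have hset : Ioc a b ∩ Iio s = Ioo a s := by
      ext; simp only [mem_inter_iff, mem_Ioc, mem_Iio, mem_Ioo]; grind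
    rw [integral_of_le hs.1.le, integral_Ioc_eq_integral_Ioo, ← hset,
      ← setIntegral_indicator measurableSet_Iio]
    rfl
  have hright : ∀ τ ∈ Ioc a b, ∫ s in τ..b, H s τ = ∫ s in Ioc a b, G s τ := fun τ hτ => by
    have hset : Ioc a b ∩ Ioi τ = Ioc τ b := by rw [Ioc_inter_Ioi, sup_of_le_right hτ.1.le]
    rw [integral_of_le hτ.2, ← hset, ← setIntegral_indicator measurableSet_Ioi]
    rfl
  rw [integral_of_le hab, integral_of_le hab, setIntegral_congr_fun measurableSet_Ioc hleft,
    setIntegral_congr_fun measurableSet_Ioc hright]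
  exact integral_integral_swap hG

theorem integrable_mul_mul_prod_of_continuousOn {k γ : ℝ → ℝ} {g : ℝ × ℝ → ℝ} {a b : ℝ}
    (hk : IntegrableOn k (Ioc a b)) (hγ : IntegrableOn γ (Ioc a b))
    (hg : ContinuousOn g (Icc a b ×ˢ Icc a b)) :
    Integrable (fun p : ℝ × ℝ => g p * (k p.1 * γ p.2))
      ((volume.restrict (Ioc a b)).prod (volume.restrict (Ioc a b))) := by
  obtain ⟨C, hC⟩ := (isCompact_Icc.prod isCompact_Icc).exists_bound_of_continuousOn hg
  have hsq : Ioc a b ×ˢ Ioc a b ⊆ Icc a b ×ˢ Icc a b :=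
    prod_mono Ioc_subset_Icc_self Ioc_subset_Icc_self
  refine (hk.mul_prod hγ).bdd_mul (c := C) ?_ ?_ <;> rw [Measure.prod_restrict]
  · exact (hg.mono hsq).aestronglyMeasurable (measurableSet_Ioc.prod measurableSet_Ioc)
  · filter_upwards [ae_restrict_mem (measurableSet_Ioc.prod measurableSet_Ioc)] with p hp
      using hC p (hsq hp)

theorem integral_mul_integral_pow_sub_div_factorial {k γ c : ℝ → ℝ} {a b : ℝ}
    (hab : a ≤ b) (hk : IntervalIntegrable k volume a b) (hγ : IntervalIntegrable γ volume a b)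
    (hc : ∀ x, c x = ∫ r in a..x, k r) (m : ℕ) :
    ∫ s in a..b, k s * ∫ τ in a..s, (c s - c τ) ^ m / m.factorial * γ τ =
      ∫ s in a..b, (c b - c s) ^ (m + 1) / (m + 1).factorial * γ s := by
  have hc_cont : ContinuousOn c (Icc a b) := by
    simpa only [← uIcc_of_le hab, ← funext hc]
      using (hk.absolutelyContinuousOnInterval_intervalIntegral left_mem_uIcc).continuousOn
  have hk_sub {x y : ℝ} (hx : x ∈ Icc a b) (hy : y ∈ Icc a b) : IntervalIntegrable k volume x y :=
    hk.mono_set (uIcc_subset_uIcc (by simpa [uIcc_of_le hab]) (by simpa [uIcc_of_le hab]))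
  have hc_sub {x y : ℝ} (hx : x ∈ Icc a b) (hy : y ∈ Icc a b) :
      c y - c x = ∫ r in x..y, k r := by
    rw [hc, hc, integral_interval_sub_left (hk_sub (left_mem_Icc.2 hab) hy)
      (hk_sub (left_mem_Icc.2 hab) hx)]
  have hpow : ∀ τ ∈ Icc a b,
      ∫ s in τ..b, k s * (c s - c τ) ^ m = (c b - c τ) ^ (m + 1) / (m + 1) := by
    intro τ hτ
    rw [hc_sub hτ (right_mem_Icc.2 hab),
      ← integral_mul_primitive_pow (hk_sub hτ (right_mem_Icc.2 hab))]
    refine integral_congr fun s hs => ?_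
    rw [uIcc_of_le hτ.2] at hs
    rw [hc_sub hτ ⟨hτ.1.trans hs.1, hs.2⟩]
  have hkernel : ContinuousOn (fun p : ℝ × ℝ => (c p.1 - c p.2) ^ m / m.factorial)
      (Icc a b ×ˢ Icc a b) :=
    (((hc_cont.comp continuousOn_fst fun _ hp => hp.1).sub
      (hc_cont.comp continuousOn_snd fun _ hp => hp.2)).pow m).div_const _
  calc ∫ s in a..b, k s * ∫ τ in a..s, (c s - c τ) ^ m / m.factorial * γ τ
      = ∫ s in a..b, ∫ τ in a..s, (c s - c τ) ^ m / m.factorial * (k s * γ τ) :=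
        integral_congr fun s _ => by
          simp only [← intervalIntegral.integral_const_mul, mul_left_comm (k s)]
    _ = ∫ τ in a..b, ∫ s in τ..b, (c s - c τ) ^ m / m.factorial * (k s * γ τ) :=
        integral_integral_swap_triangle hab
          (integrable_mul_mul_prod_of_continuousOn hk.1 hγ.1 hkernel)
    _ = ∫ τ in a..b, (c b - c τ) ^ (m + 1) / (m + 1).factorial * γ τ := by
        refine integral_congr fun τ hτ => ?_
        rw [uIcc_of_le hab] at hτ
        calc ∫ s in τ..b, (c s - c τ) ^ m / m.factorial * (k s * γ τ)
            = (∫ s in τ..b, k s * (c s - c τ) ^ m) * (γ τ / m.factorial) := by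
              rw [← intervalIntegral.integral_mul_const]
              exact integral_congr fun s _ => by ring
          _ = (c b - c τ) ^ (m + 1) / (m + 1).factorial * γ τ := by
              rw [hpow τ hτ, Nat.factorial_succ]
              push_cast
              field_simp

theorem stmt10_general (T₀ T : ℝ) (k₀ γ : ℝ → ℝ)
    (hkint : IntegrableOn k₀ (Set.Icc T₀ T)) (hγint : IntegrableOn γ (Set.Icc T₀ T))
    (c : ℝ → ℝ) (hc : ∀ t, c t = ∫ τ in T₀..t, k₀ τ)
    (i : ℕ) (hi : 1 ≤ i) (t : ℝ) (ht : t ∈ Set.Icc T₀ T) :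
    (∫ s in T₀..t, k₀ s *
        ∫ τ in T₀..s, (c s - c τ) ^ (i - 1) / ((i - 1).factorial : ℝ) * γ τ) =
      ∫ s in T₀..t, (c t - c s) ^ i / (i.factorial : ℝ) * γ s := by
  obtain ⟨m, rfl⟩ := Nat.exists_eq_add_of_le' hi
  have hsub : uIcc T₀ t ⊆ Icc T₀ T := uIcc_subset_Icc (left_mem_Icc.2 (ht.1.trans ht.2)) ht
  simpa only [Nat.add_sub_cancel] using integral_mul_integral_pow_sub_div_factorial ht.1
    (hkint.mono_set hsub).intervalIntegrable (hγint.mono_set hsub).intervalIntegrable hc m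

theorem stmt10 (T₀ T : ℝ) (hT : T₀ ≤ T) (k₀ γ : ℝ → ℝ)
    (hk0 : ∀ t, 0 ≤ k₀ t) (hγ0 : ∀ t, 0 ≤ γ t)
    (hkint : IntegrableOn k₀ (Set.Icc T₀ T)) (hγint : IntegrableOn γ (Set.Icc T₀ T))
    (c : ℝ → ℝ) (hc : ∀ t, c t = ∫ τ in T₀..t, k₀ τ)
    (i : ℕ) (hi : 1 ≤ i) (t : ℝ) (ht : t ∈ Set.Icc T₀ T) :
    (∫ s in T₀..t, k₀ s *
        ∫ τ in T₀..s, (c s - c τ) ^ (i - 1) / ((i - 1).factorial : ℝ) * γ τ) =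
      ∫ s in T₀..t, (c t - c s) ^ i / (i.factorial : ℝ) * γ s :=
  stmt10_general T₀ T k₀ γ hkint hγint c hc i hi t ht
end

section
/- Let H be a Hilbert space, I = [T₀,T], and suppose x₁, x₂ : I → H are absolutely continuous with D(t) := ‖x₁(t) − x₂(t)‖ satisfying, for a.e. t ∈ I, (d/dt)(D(t)²) ≤ 2(L₁(t) + φ(t)/r)·D(t)² + 2‖Z(t)‖·D(t) + 2L₂(t)·D(t)·∫_{T₀}^t D(s) ds, where L₁, L₂, φ ∈ L¹(I,ℝ₊), r > 0, and Z ∈ L¹(I,H). Then for all t ∈ I, ‖x₁(t) − x₂(t)‖ ≤ exp(∫_{T₀}^T (K(τ)+1) dτ)·(‖x₁(T₀) − x₂(T₀)‖ + ∫_{T₀}^t ‖Z(s)‖ ds), where K(t) := max{L₁(t) + φ(t)/r, L₂(t)}. -/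
/-!
Put `u = √(D² + ε²)` and `W = u + ∫_{T₀}^· u`. Since `D ≤ u` and `u' = (D²)' / (2u)`, the
hypothesis gives `W' ≤ (K + 1) W + ‖Z‖` almost everywhere; the regularization `ε > 0` makes `u`
differentiable wherever `D²` is. As `W` is absolutely continuous, integrating
`(W e^{-∫(K+1)})' ≤ ‖Z‖` gives the linear Gronwall bound, and `ε → 0` gives the claim.
-/

open MeasureTheory intervalIntegral Real
open Set Filter Topology

namespace AbsolutelyContinuousOnInterval

variable {X Y : Type*} [PseudoMetricSpace X] [PseudoMetricSpace Y] {a b : ℝ}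

theorem congr {f g : ℝ → X} (hf : AbsolutelyContinuousOnInterval f a b)
    (hfg : EqOn f g (uIcc a b)) : AbsolutelyContinuousOnInterval g a b := by
  refine hf.congr' ?_
  rw [EventuallyEq, eventually_inf_principal]
  filter_upwards with E hE
  refine Finset.sum_congr rfl fun i hi => ?_
  rw [hfg (hE.1 i hi).1, hfg (hE.1 i hi).2]

theorem _root_.LipschitzOnWith.comp_absolutelyContinuousOnInterval {f : ℝ → X} {g : X → Y}
    {K : NNReal} {s : Set X} (hg : LipschitzOnWith K g s)
    (hf : AbsolutelyContinuousOnInterval f a b) (hfs : MapsTo f (uIcc a b) s) :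
    AbsolutelyContinuousOnInterval (g ∘ f) a b := by
  unfold AbsolutelyContinuousOnInterval at hf ⊢
  refine squeeze_zero' (Eventually.of_forall fun E => Finset.sum_nonneg fun i _ => dist_nonneg)
    ?_ (by simpa only [mul_zero] using hf.const_mul (K : ℝ))
  rw [eventually_inf_principal]
  filter_upwards with E hE
  rw [Finset.mul_sum]
  exact Finset.sum_le_sum fun i hi =>
    hg.dist_le_mul _ (hfs (hE.1 i hi).1) _ (hfs (hE.1 i hi).2)

theorem comp_contDiffOn {E : Type*} [NormedAddCommGroup E] [NormedSpace ℝ E] {f : ℝ → ℝ}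
    {g : ℝ → E} {m M : ℝ} (hf : AbsolutelyContinuousOnInterval f a b)
    (hfs : MapsTo f (uIcc a b) (Icc m M)) (hg : ContDiffOn ℝ 1 g (Icc m M)) :
    AbsolutelyContinuousOnInterval (g ∘ f) a b := by
  obtain ⟨K, hK⟩ := hg.exists_lipschitzOnWith one_ne_zero (convex_Icc m M) isCompact_Icc
  exact hK.comp_absolutelyContinuousOnInterval hf hfs

theorem sqrt_add {f : ℝ → ℝ} {c : ℝ} (hf : AbsolutelyContinuousOnInterval f a b)
    (hf0 : ∀ x ∈ uIcc a b, 0 ≤ f x) (hc : 0 < c) :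
    AbsolutelyContinuousOnInterval (fun x => √(f x + c)) a b := by
  obtain ⟨C, hC⟩ := hf.exists_bound
  refine hf.comp_contDiffOn (m := 0) (M := C) (g := fun y => √(y + c))
    (fun x hx => ⟨hf0 x hx, (le_abs_self _).trans (hC x hx)⟩) fun y hy => ?_
  have : y + c ≠ 0 := by linarith [hy.1]
  exact ((contDiffAt_id.add contDiffAt_const).sqrt this).contDiffWithinAt

end AbsolutelyContinuousOnInterval

theorem IntervalIntegrable.absolutelyContinuousOnInterval_of_eqOn_integral
    {f f' : ℝ → ℝ} {a b : ℝ} (hf' : IntervalIntegrable f' volume a b)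
    (hf : ∀ x ∈ uIcc a b, f x = f a + ∫ t in a..x, f' t) :
    AbsolutelyContinuousOnInterval f a b :=
  ((LipschitzWith.const (f a)).lipschitzOnWith.absolutelyContinuousOnInterval.add
    (hf'.absolutelyContinuousOnInterval_intervalIntegral left_mem_uIcc)).congr
    fun x hx => (hf x hx).symm

theorem IntervalIntegrable.ae_hasDerivAt_of_eqOn_integral {f f' : ℝ → ℝ} {a b : ℝ}
    (hf' : IntervalIntegrable f' volume a b)
    (hf : ∀ x ∈ uIcc a b, f x = f a + ∫ t in a..x, f' t) :
    ∀ᵐ x, x ∈ Ioo a b → HasDerivAt f (f' x) x := by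
  filter_upwards [hf'.ae_hasDerivAt_integral] with x hx hxab
  have hmem : uIcc a b ∈ 𝓝 x :=
    mem_of_superset (Ioo_mem_nhds hxab.1 hxab.2) (Icc_subset_uIcc.trans' Ioo_subset_Icc_self)
  exact ((hx (Ioo_subset_Icc_self.trans Icc_subset_uIcc hxab) a left_mem_uIcc).const_add
    (f a)).congr_of_eventuallyEq (eventually_of_mem hmem hf)

theorem AbsolutelyContinuousOnInterval.le_exp_integral_mul_of_ae_deriv_le
    {W β γ : ℝ → ℝ} {a b : ℝ} (hab : a ≤ b) (hW : AbsolutelyContinuousOnInterval W a b)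
    (hβ : IntervalIntegrable β volume a b) (hβ0 : ∀ x ∈ Icc a b, 0 ≤ β x)
    (hγ : IntervalIntegrable γ volume a b) (hγ0 : ∀ x ∈ Icc a b, 0 ≤ γ x)
    (hW' : ∀ᵐ x, x ∈ Ioo a b → deriv W x ≤ β x * W x + γ x) :
    W b ≤ exp (∫ x in a..b, β x) * (W a + ∫ x in a..b, γ x) := by
  set B : ℝ → ℝ := fun x => ∫ t in a..x, β t
  have hB : AbsolutelyContinuousOnInterval B a b :=
    hβ.absolutelyContinuousOnInterval_intervalIntegral left_mem_uIcc
  obtain ⟨C, hC⟩ := hB.exists_bound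
  set E : ℝ → ℝ := fun x => exp (-B x)
  have hE : AbsolutelyContinuousOnInterval E a b :=
    hB.neg.comp_contDiffOn (m := -C) (M := C) (g := exp)
      (fun x hx => abs_le.mp (by simpa using hC x hx)) contDiff_exp.contDiffOn
  have hE1 : ∀ x ∈ Icc a b, E x ≤ 1 := fun x hx =>
    exp_le_one_iff.mpr <| neg_nonpos.mpr <|
      integral_nonneg hx.1 fun t ht => hβ0 t ⟨ht.1, ht.2.trans hx.2⟩
  have hWE := hW.mul hE
  have hderiv : ∀ᵐ x ∂volume.restrict (Icc a b), deriv (W * E) x ≤ γ x := by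
    rw [← Measure.restrict_congr_set Ioo_ae_eq_Icc, ae_restrict_iff' measurableSet_Ioo]
    filter_upwards [hW.ae_differentiableAt, hβ.ae_hasDerivAt_integral, hW']
      with x hWx hBx hWx' hxo
    have hx : x ∈ Icc a b := Ioo_subset_Icc_self hxo
    have hx' : x ∈ uIcc a b := uIcc_of_le hab ▸ hx
    calc deriv (W * E) x = (deriv W x - β x * W x) * E x :=
          ((hWx hx').hasDerivAt.mul (hBx hx' a left_mem_uIcc).neg.exp).deriv.trans <| by
            simp only [Pi.neg_apply, E, B]; ring
      _ ≤ γ x * E x := by gcongr; linarith [hWx' hxo]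
      _ ≤ γ x := mul_le_of_le_one_right (hγ0 x hx) (hE1 x hx)
  have hWEb : (W * E) b - (W * E) a ≤ ∫ x in a..b, γ x :=
    hWE.integral_deriv_eq_sub ▸
      integral_mono_ae_restrict hab hWE.intervalIntegrable_deriv hγ hderiv
  have hEa : E a = 1 := by simp [E, B]
  have hEb : E b * exp (B b) = 1 := by rw [← exp_add, neg_add_cancel, exp_zero]
  calc W b = W b * E b * exp (B b) := by rw [mul_assoc, hEb, mul_one]
    _ ≤ (W a + ∫ x in a..b, γ x) * exp (B b) := by
        gcongr; simp only [Pi.mul_apply, hEa] at hWEb; linarith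
    _ = _ := mul_comm _ _

theorem div_two_sqrt_sq_add_sq_le {d ρ' k z I J ε : ℝ} (hd : 0 ≤ d) (hε : 0 < ε) (hk : 0 ≤ k)
    (hz : 0 ≤ z) (hI : 0 ≤ I) (hIJ : I ≤ J)
    (h : ρ' ≤ 2 * k * d ^ 2 + 2 * z * d + 2 * k * d * I) :
    ρ' / (2 * √(d ^ 2 + ε ^ 2)) ≤ k * √(d ^ 2 + ε ^ 2) + z + k * J := by
  have hdu : d ≤ √(d ^ 2 + ε ^ 2) :=
    Real.le_sqrt_of_sq_le (le_add_of_nonneg_right (sq_nonneg ε))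
  rw [div_le_iff₀ (by positivity)]
  calc ρ' ≤ 2 * d * (k * d + z + k * I) := by linarith
    _ ≤ 2 * √(d ^ 2 + ε ^ 2) * (k * √(d ^ 2 + ε ^ 2) + z + k * J) := by gcongr
    _ = _ := by ring

theorem le_exp_integral_mul_sqrt_sq_add_sq_of_ae_deriv_sq_le {d K z : ℝ → ℝ} {a b ε : ℝ}
    (hab : a ≤ b) (hε : 0 < ε) (hd : AbsolutelyContinuousOnInterval (fun x => d x ^ 2) a b)
    (hd0 : ∀ x ∈ Icc a b, 0 ≤ d x)
    (hK : IntervalIntegrable K volume a b) (hK0 : ∀ x ∈ Icc a b, 0 ≤ K x)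
    (hz : IntervalIntegrable z volume a b) (hz0 : ∀ x ∈ Icc a b, 0 ≤ z x)
    (hd' : ∀ᵐ x, x ∈ Ioo a b → deriv (fun x => d x ^ 2) x ≤
      2 * K x * d x ^ 2 + 2 * z x * d x + 2 * K x * d x * ∫ t in a..x, d t) :
    d b ≤ exp (∫ x in a..b, (K x + 1)) * (√(d a ^ 2 + ε ^ 2) + ∫ x in a..b, z x) := by
  have hIcc := uIcc_of_le hab
  set u : ℝ → ℝ := fun x => √(d x ^ 2 + ε ^ 2)
  have hu : AbsolutelyContinuousOnInterval u a b :=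
    hd.sqrt_add (fun _ _ => sq_nonneg _) (by positivity)
  have huint : IntervalIntegrable u volume a b := hu.continuousOn.intervalIntegrable
  set J : ℝ → ℝ := fun x => ∫ t in a..x, u t
  have hJ : AbsolutelyContinuousOnInterval J a b :=
    huint.absolutelyContinuousOnInterval_intervalIntegral left_mem_uIcc
  have hdcont : ContinuousOn d (Icc a b) :=
    (hIcc ▸ hd.continuousOn.sqrt).congr fun x hx => (sqrt_sq (hd0 x hx)).symm
  have hdu : ∀ x, d x ≤ u x := fun x => le_sqrt_of_sq_le (le_add_of_nonneg_right (sq_nonneg ε))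
  have hJ0 : ∀ x ∈ Icc a b, 0 ≤ J x := fun x hx =>
    integral_nonneg hx.1 fun _ _ => sqrt_nonneg _
  have hI0 : ∀ x ∈ Icc a b, 0 ≤ ∫ t in a..x, d t := fun x hx =>
    integral_nonneg hx.1 fun t ht => hd0 t ⟨ht.1, ht.2.trans hx.2⟩
  have hIJ : ∀ x ∈ Icc a b, ∫ t in a..x, d t ≤ J x := fun x hx =>
    integral_mono_on hx.1
      ((hdcont.mono (Icc_subset_Icc_right hx.2)).intervalIntegrable_of_Icc hx.1)
      (huint.mono_set (by rw [uIcc_of_le hx.1, hIcc]; exact Icc_subset_Icc_right hx.2))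
      fun t _ => hdu t
  have hW' : ∀ᵐ x, x ∈ Ioo a b → deriv (u + J) x ≤ (K x + 1) * (u + J) x + z x := by
    filter_upwards [hd.ae_differentiableAt, huint.ae_hasDerivAt_integral, hd']
      with x hdx hJx hdx' hx
    have hxI : x ∈ Icc a b := Ioo_subset_Icc_self hx
    have hxu : x ∈ uIcc a b := hIcc ▸ hxI
    have hux : HasDerivAt u (deriv (fun x => d x ^ 2) x / (2 * u x)) x :=
      ((hdx hxu).hasDerivAt.add_const (ε ^ 2)).sqrt (by positivity)
    rw [(hux.add (hJx hxu a left_mem_uIcc)).deriv]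
    have hux' := div_two_sqrt_sq_add_sq_le (hd0 x hxI) hε (hK0 x hxI) (hz0 x hxI) (hI0 x hxI)
      (hIJ x hxI) (hdx' hx)
    have hexp : (K x + 1) * (u + J) x + z x = K x * u x + z x + K x * J x + u x + J x := by
      simp only [Pi.add_apply]; ring
    rw [hexp]
    linarith [hux', hJ0 x hxI]
  have hG := (hu.add hJ).le_exp_integral_mul_of_ae_deriv_le hab (hK.add intervalIntegrable_const)
    (fun x hx => by linarith [hK0 x hx]) hz hz0 hW'
  simp only [Pi.add_apply, J, integral_same, add_zero] at hG
  linarith [hdu b, hJ0 b ⟨hab, le_rfl⟩]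

theorem le_exp_integral_mul_of_ae_deriv_sq_le {d K z : ℝ → ℝ} {a b : ℝ}
    (hab : a ≤ b) (hd : AbsolutelyContinuousOnInterval (fun x => d x ^ 2) a b)
    (hd0 : ∀ x ∈ Icc a b, 0 ≤ d x)
    (hK : IntervalIntegrable K volume a b) (hK0 : ∀ x ∈ Icc a b, 0 ≤ K x)
    (hz : IntervalIntegrable z volume a b) (hz0 : ∀ x ∈ Icc a b, 0 ≤ z x)
    (hd' : ∀ᵐ x, x ∈ Ioo a b → deriv (fun x => d x ^ 2) x ≤
      2 * K x * d x ^ 2 + 2 * z x * d x + 2 * K x * d x * ∫ t in a..x, d t) :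
    d b ≤ exp (∫ x in a..b, (K x + 1)) * (d a + ∫ x in a..b, z x) := by
  refine le_of_forall_pos_le_add fun δ hδ => ?_
  set κ := exp (∫ x in a..b, (K x + 1))
  have hκ : 0 < κ := exp_pos _
  have hda := hd0 a ⟨le_rfl, hab⟩
  calc d b ≤ κ * (√(d a ^ 2 + (δ / κ) ^ 2) + ∫ x in a..b, z x) :=
        le_exp_integral_mul_sqrt_sq_add_sq_of_ae_deriv_sq_le hab (div_pos hδ hκ) hd hd0 hK hK0
          hz hz0 hd'
    _ ≤ κ * (d a + δ / κ + ∫ x in a..b, z x) := by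
        gcongr
        exact sqrt_le_iff.mpr ⟨by positivity, by nlinarith [div_pos hδ hκ]⟩
    _ = κ * (d a + ∫ x in a..b, z x) + δ := by field_simp; ring

theorem stmt18_general (T₀ T : ℝ) {H : Type*} [NormedAddCommGroup H]
    (x₁ x₂ : ℝ → H)
    (L₁ L₂ φ : ℝ → ℝ) (r : ℝ) (Z : ℝ → H)
    (hL₂0 : ∀ t, 0 ≤ L₂ t)
    (hL₁int : IntegrableOn L₁ (Set.Icc T₀ T)) (hL₂int : IntegrableOn L₂ (Set.Icc T₀ T))
    (hφint : IntegrableOn φ (Set.Icc T₀ T)) (hZint : IntegrableOn Z (Set.Icc T₀ T))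
    (D2' : ℝ → ℝ) (hD2'int : IntegrableOn D2' (Set.Icc T₀ T))
    (hAC : ∀ s ∈ Set.Icc T₀ T, ∀ t ∈ Set.Icc T₀ T, s ≤ t →
      ‖x₁ t - x₂ t‖ ^ 2 - ‖x₁ s - x₂ s‖ ^ 2 = ∫ u in s..t, D2' u)
    (hineq : ∀ᵐ t ∂(volume.restrict (Set.Icc T₀ T)),
      D2' t ≤ 2 * (L₁ t + φ t / r) * ‖x₁ t - x₂ t‖ ^ 2 +
        2 * ‖Z t‖ * ‖x₁ t - x₂ t‖ +
        2 * L₂ t * ‖x₁ t - x₂ t‖ * ∫ s in T₀..t, ‖x₁ s - x₂ s‖) :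
    ∀ t ∈ Set.Icc T₀ T,
      ‖x₁ t - x₂ t‖ ≤
        exp (∫ τ in T₀..T, (max (L₁ τ + φ τ / r) (L₂ τ) + 1)) *
          (‖x₁ T₀ - x₂ T₀‖ + ∫ s in T₀..t, ‖Z s‖) := by
  intro t ht
  set D : ℝ → ℝ := fun τ => ‖x₁ τ - x₂ τ‖
  set K : ℝ → ℝ := fun τ => max (L₁ τ + φ τ / r) (L₂ τ)
  have hsub : Icc T₀ t ⊆ Icc T₀ T := Icc_subset_Icc_right ht.2
  have hint {f : ℝ → ℝ} (hf : IntegrableOn f (Icc T₀ T)) : IntervalIntegrable f volume T₀ t :=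
    (intervalIntegrable_iff_integrableOn_Icc_of_le ht.1).mpr (hf.mono_set hsub)
  have hKint : IntegrableOn K (Icc T₀ T) := (hL₁int.add (hφint.div_const r)).sup hL₂int
  have hK0 : ∀ τ, 0 ≤ K τ := fun τ => (hL₂0 τ).trans (le_max_right _ _)
  have hrep : ∀ x ∈ uIcc T₀ t, D x ^ 2 = D T₀ ^ 2 + ∫ s in T₀..x, D2' s := fun x hx => by
    rw [uIcc_of_le ht.1] at hx
    linarith [hAC T₀ ⟨le_rfl, ht.1.trans ht.2⟩ x (hsub hx) hx.1]
  have hD2' := hint hD2'int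
  have hDt : D t ≤ exp (∫ τ in T₀..t, (K τ + 1)) * (D T₀ + ∫ s in T₀..t, ‖Z s‖) := by
    refine le_exp_integral_mul_of_ae_deriv_sq_le ht.1
      (hD2'.absolutelyContinuousOnInterval_of_eqOn_integral hrep) (fun _ _ => norm_nonneg _)
      (hint hKint) (fun τ _ => hK0 τ) (hint hZint.norm) (fun _ _ => norm_nonneg _) ?_
    filter_upwards [hD2'.ae_hasDerivAt_of_eqOn_integral hrep,
      (ae_restrict_iff' measurableSet_Icc).mp hineq] with τ hτd hτ hτo
    rw [(hτd hτo).deriv]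
    refine (hτ (hsub (Ioo_subset_Icc_self hτo))).trans ?_
    have : 0 ≤ ∫ s in T₀..τ, D s := integral_nonneg hτo.1.le fun _ _ => norm_nonneg _
    gcongr
    exacts [le_max_left _ _, le_max_right _ _]
  have hZ0 : 0 ≤ ∫ s in T₀..t, ‖Z s‖ := integral_nonneg ht.1 fun _ _ => norm_nonneg _
  refine hDt.trans (mul_le_mul_of_nonneg_right (exp_le_exp.mpr ?_) (by positivity))
  exact integral_mono_interval le_rfl ht.1 ht.2
    (ae_of_all _ fun τ => add_nonneg (hK0 τ) zero_le_one)
    ((intervalIntegrable_iff_integrableOn_Icc_of_le (ht.1.trans ht.2)).mpr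
      (hKint.add (integrableOn_const measure_Icc_lt_top.ne)))

theorem stmt18 (T₀ T : ℝ) (hT : T₀ ≤ T) {H : Type*} [NormedAddCommGroup H]
    [InnerProductSpace ℝ H] [CompleteSpace H]
    (x₁ x₂ : ℝ → H) (hx₁ : ContinuousOn x₁ (Set.Icc T₀ T))
    (hx₂ : ContinuousOn x₂ (Set.Icc T₀ T))
    (L₁ L₂ φ : ℝ → ℝ) (r : ℝ) (hr : 0 < r) (Z : ℝ → H)
    (hL₁0 : ∀ t, 0 ≤ L₁ t) (hL₂0 : ∀ t, 0 ≤ L₂ t) (hφ0 : ∀ t, 0 ≤ φ t)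
    (hL₁int : IntegrableOn L₁ (Set.Icc T₀ T)) (hL₂int : IntegrableOn L₂ (Set.Icc T₀ T))
    (hφint : IntegrableOn φ (Set.Icc T₀ T)) (hZint : IntegrableOn Z (Set.Icc T₀ T))
    (D2' : ℝ → ℝ) (hD2'int : IntegrableOn D2' (Set.Icc T₀ T))
    (hAC : ∀ s ∈ Set.Icc T₀ T, ∀ t ∈ Set.Icc T₀ T, s ≤ t →
      ‖x₁ t - x₂ t‖ ^ 2 - ‖x₁ s - x₂ s‖ ^ 2 = ∫ u in s..t, D2' u)
    (hineq : ∀ᵐ t ∂(volume.restrict (Set.Icc T₀ T)),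
      D2' t ≤ 2 * (L₁ t + φ t / r) * ‖x₁ t - x₂ t‖ ^ 2 +
        2 * ‖Z t‖ * ‖x₁ t - x₂ t‖ +
        2 * L₂ t * ‖x₁ t - x₂ t‖ * ∫ s in T₀..t, ‖x₁ s - x₂ s‖) :
    ∀ t ∈ Set.Icc T₀ T,
      ‖x₁ t - x₂ t‖ ≤
        exp (∫ τ in T₀..T, (max (L₁ τ + φ τ / r) (L₂ τ) + 1)) *
          (‖x₁ T₀ - x₂ T₀‖ + ∫ s in T₀..t, ‖Z s‖) :=
  stmt18_general T₀ T x₁ x₂ L₁ L₂ φ r Z hL₂0 hL₁int hL₂int hφint hZint D2' hD2'int hAC hineq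
end
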